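/- Let Q = ℝ^d with a continuous Finsler dissipation R₁ (each R₁(q,·) a norm), induced complete Finsler distance d, and E ∈ C¹([0,T] × ℝ^d; ℝ). Let (t̂,q̂) : [s₀,s₁] → [0,T] × ℝ^d be absolutely continuous with t̂ nondecreasing and t̂'(s) + |q̂'|(s) > 0 for a.e. s. Then (t̂,q̂) satisfies the parametrized-solution inequality (d/ds) E(t̂(s),q̂(s)) − ∂_t E(t̂(s),q̂(s)) t̂'(s) ≤ −M₀(t̂'(s), |q̂'|(s), |∂E|(t̂(s),q̂(s))) for a.e. s if and only if for a.e. s ∈ (s₀,s₁) both: (i) (d/ds) E(t̂(s),q̂(s)) − ∂_t E(t̂(s),q̂(s)) t̂'(s) = − |q̂'|(s) · |∂E|(t̂(s),q̂(s)); and (ii) t̂'(s) > 0 implies |∂E|(t̂(s),q̂(s)) ≤ 1, and |q̂'|(s) > 0 implies |∂E|(t̂(s),q̂(s)) ≥ 1. -/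

import Mathlib

open MeasureTheory Filter Set Function
open scoped Topology ENNReal RealInnerProductSpace

noncomputable section

/-- `y` is absolutely continuous on `[a,b]` with (a.e.) derivative `y'`:
it is the integral of the integrable function `y'`. -/
structure IsACOn {W : Type*} [NormedAddCommGroup W] [NormedSpace ℝ W]
    (a b : ℝ) (y : ℝ → W) (y' : ℝ → W) : Prop where
  intg : IntervalIntegrable y' volume a b
  eq : ∀ t ∈ Set.Icc a b, y t = y a + ∫ s in a..t, y' s

/-- A continuous Finsler dissipation: `R1 q ·` is a norm for every `q`. -/
structure IsFinsler {V : Type*} [NormedAddCommGroup V] [NormedSpace ℝ V]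
    (R1 : V → V → ℝ) : Prop where
  cont : Continuous fun p : V × V => R1 p.1 p.2
  nonneg : ∀ q v, 0 ≤ R1 q v
  eq_zero_iff : ∀ q v, R1 q v = 0 ↔ v = 0
  smul : ∀ (q : V) (c : ℝ) (v : V), R1 q (c • v) = |c| * R1 q v
  triangle : ∀ q u v, R1 q (u + v) ≤ R1 q u + R1 q v

/-- The Finsler distance induced by the dissipation `R1`. -/
def finslerDist {V : Type*} [NormedAddCommGroup V] [NormedSpace ℝ V]
    (R1 : V → V → ℝ) (q0 q1 : V) : ℝ :=
  sInf {L | ∃ y y' : ℝ → V, IsACOn 0 1 y y' ∧ y 0 = q0 ∧ y 1 = q1 ∧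
    L = ∫ s in (0:ℝ)..1, R1 (y s) (y' s)}

/-- Completeness of the space w.r.t. a distance function `dF`. -/
def IsCompleteD {V : Type*} (dF : V → V → ℝ) : Prop :=
  ∀ u : ℕ → V, (∀ ε > 0, ∃ N, ∀ m ≥ N, ∀ n ≥ N, dF (u m) (u n) < ε) →
    ∃ x : V, Filter.Tendsto (fun k => dF (u k) x) Filter.atTop (𝓝 0)

/-- `E` is a `C¹` energy with partial time derivative `Et` and spatial gradient `DqE`. -/
structure IsC1Energy {V : Type*} [NormedAddCommGroup V] [InnerProductSpace ℝ V]
    [CompleteSpace V] (E Et : ℝ → V → ℝ) (DqE : ℝ → V → V) : Prop where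
  contE : Continuous fun p : ℝ × V => E p.1 p.2
  contEt : Continuous fun p : ℝ × V => Et p.1 p.2
  contDqE : Continuous fun p : ℝ × V => DqE p.1 p.2
  hasDerivT : ∀ t q, HasDerivAt (fun τ => E τ q) (Et t q) t
  hasGrad : ∀ t q, HasGradientAt (fun x => E t x) (DqE t q) q

/-- The local slope `|∂E|(t,q) = sup_{v ≠ 0} ⟨D_qE(t,q), v⟩ / R₁(q,v)`. -/
def localSlope {V : Type*} [NormedAddCommGroup V] [InnerProductSpace ℝ V]
    (R1 : V → V → ℝ) (DqE : ℝ → V → V) (t : ℝ) (q : V) : ℝ :=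
  sSup {r | ∃ v : V, v ≠ 0 ∧ r = (inner ℝ (DqE t q) v : ℝ) / R1 q v}

/-- The limit function `M₀` (with values in `EReal`). -/
def M0 (a v x : ℝ) : EReal :=
  if a = 0 then ((v + v * max (x - 1) 0 : ℝ) : EReal)
  else if x ≤ 1 then ((v : ℝ) : EReal) else ⊤

/-- The limit function `M₀` (with values in `ℝ≥0∞`). -/
def M0E (a v x : ℝ) : ℝ≥0∞ :=
  if a = 0 then ENNReal.ofReal (v + v * max (x - 1) 0)
  else if x ≤ 1 then ENNReal.ofReal v else ⊤

/-- The viscous functional `M_ε` (with values in `ℝ≥0∞`). -/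
def MepsE (ε a v x : ℝ) : ℝ≥0∞ :=
  if a = 0 then (if v = 0 then 0 else ⊤)
  else ENNReal.ofReal (v + ε / (2 * a) * v ^ 2 + a / (2 * ε) * (max (x - 1) 0) ^ 2)

/-- Convex subdifferential of a real-valued function. -/
def subdiff {V : Type*} [NormedAddCommGroup V] [InnerProductSpace ℝ V]
    (f : V → ℝ) (v : V) : Set V :=
  {w | ∀ u, f v + (inner ℝ w (u - v) : ℝ) ≤ f u}

/-- Convex subdifferential of an extended-real-valued function. -/
def subdiffE {V : Type*} [NormedAddCommGroup V] [InnerProductSpace ℝ V]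
    (f : V → EReal) (v : V) : Set V :=
  {w | ∀ u, f v + (((inner ℝ w (u - v) : ℝ) : ℝ) : EReal) ≤ f u}

/-- `R̂(q,v) = R₁(q,v)` if `R₁(q,v) ≤ 1`, `+∞` otherwise. -/
def Rhat {V : Type*} (R1 : V → V → ℝ) (q v : V) : EReal :=
  if R1 q v ≤ 1 then ((R1 q v : ℝ) : EReal) else ⊤

/-- A parametrized metric solution of the rate-independent system `(ℝ^d, d, E)`. -/
structure IsParamSol {V : Type*} [NormedAddCommGroup V] [InnerProductSpace ℝ V]
    [CompleteSpace V]
    (R1 : V → V → ℝ) (E Et : ℝ → V → ℝ) (DqE : ℝ → V → V) (T s₀ s₁ : ℝ)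
    (th th' : ℝ → ℝ) (qh qh' : ℝ → V) : Prop where
  acT : IsACOn s₀ s₁ th th'
  acQ : IsACOn s₀ s₁ qh qh'
  maps : ∀ s ∈ Set.Icc s₀ s₁, th s ∈ Set.Icc 0 T
  mono : MonotoneOn th (Set.Icc s₀ s₁)
  nondeg : ∀ᵐ s ∂volume, s ∈ Set.Ioo s₀ s₁ → 0 < th' s + R1 (qh s) (qh' s)
  evi : ∀ᵐ s ∂volume, s ∈ Set.Ioo s₀ s₁ →
    ((deriv (fun r => E (th r) (qh r)) s - Et (th s) (qh s) * th' s : ℝ) : EReal)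
      ≤ -(M0 (th' s) (R1 (qh s) (qh' s)) (localSlope R1 DqE (th s) (qh s)))

/-- A solution of the viscous `ψ_ε`-gradient system. -/
structure IsViscousSol {V : Type*} [NormedAddCommGroup V] [InnerProductSpace ℝ V]
    [CompleteSpace V]
    (R1 : V → V → ℝ) (E Et : ℝ → V → ℝ) (DqE : ℝ → V → V) (T ε : ℝ)
    (q q' : ℝ → V) : Prop where
  ac : IsACOn 0 T q q'
  evi : ∀ᵐ t ∂volume, t ∈ Set.Ioo 0 T →
    deriv (fun τ => E τ (q τ)) t ≤ Et t (q t)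
      - (R1 (q t) (q' t) + ε / 2 * (R1 (q t) (q' t)) ^ 2)
      - (max (localSlope R1 DqE t (q t) - 1) 0) ^ 2 / (2 * ε)

/-- Total variation of `q` on the set `I`, w.r.t. the distance function `dF`. -/
def varWith {Y : Type*} (dF : Y → Y → ℝ) (q : ℝ → Y) (I : Set ℝ) : ℝ≥0∞ :=
  ⨆ p : ℕ × {u : ℕ → ℝ // Monotone u ∧ ∀ i, u i ∈ I},
    ∑ i ∈ Finset.range p.1, ENNReal.ofReal (dF (q (p.2.1 i)) (q (p.2.1 (i + 1))))

/-- Left limit of a curve at `t`, with the convention `q(0⁻) = q(0)`. -/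
def llim {Y : Type*} [TopologicalSpace Y] (q : ℝ → Y) (t : ℝ) : Y :=
  if t ≤ 0 then q t else Function.leftLim q t

/-- Right limit of a curve at `t`, with the convention `q(T⁺) = q(T)`. -/
def rlim {Y : Type*} [TopologicalSpace Y] (T : ℝ) (q : ℝ → Y) (t : ℝ) : Y :=
  if T ≤ t then q t else Function.rightLim q t

/-- Continuity set of a curve `q : [0,T] → Y`. -/
def contSet {Y : Type*} [TopologicalSpace Y] (T : ℝ) (q : ℝ → Y) : Set ℝ :=
  {t | t ∈ Set.Icc 0 T ∧ llim q t = q t ∧ rlim T q t = q t}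

/-- Jump set of a curve `q : [0,T] → Y`. -/
def jumpSet {Y : Type*} [TopologicalSpace Y] (T : ℝ) (q : ℝ → Y) : Set ℝ :=
  Set.Icc 0 T \ contSet T q

/-- The (clamped) variation function `t ↦ Var(q, [0, min(t,T)])`, real-valued. -/
def vFun {Y : Type*} (dF : Y → Y → ℝ) (T : ℝ) (q : ℝ → Y) (t : ℝ) : ℝ :=
  (varWith dF q (Set.Icc 0 (min t T))).toReal

/-- `μ` is the Lebesgue–Stieltjes measure (distributional derivative) of the
variation function of `q` w.r.t. the distance `dF`. -/
def IsVarMeasure {Y : Type*} (dF : Y → Y → ℝ) (T : ℝ) (q : ℝ → Y)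
    (μ : Measure ℝ) : Prop :=
  ∀ a b : ℝ, a ≤ b → μ (Set.Ioc a b) =
    ENNReal.ofReal (Function.rightLim (vFun dF T q) b - Function.rightLim (vFun dF T q) a)

/-- Metric derivative of a curve in a (pseudo-)metric space. -/
def mderiv {Y : Type*} [PseudoMetricSpace Y] (y : ℝ → Y) (s : ℝ) : ℝ :=
  Filter.limsup (fun h : ℝ => dist (y (s + h)) (y s) / |h|) (𝓝[≠] (0 : ℝ))

/-- The slope distance `S_α(t; q₀, q₁)`. -/
def slopeDist {V : Type*} [NormedAddCommGroup V] [InnerProductSpace ℝ V]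
    (R1 : V → V → ℝ) (DqE : ℝ → V → V) (α t : ℝ) (q0 q1 : V) : ℝ :=
  sInf {r | ∃ y y' : ℝ → V, IsACOn 0 1 y y' ∧ y 0 = q0 ∧ y 1 = q1 ∧
    r = ∫ s in (0:ℝ)..1, max (localSlope R1 DqE t (y s)) α * R1 (y s) (y' s)}

/-- The dissipation functional `Σ₀(q, [t₀,t₁])`. -/
def Sigma0 {V : Type*} [NormedAddCommGroup V] [InnerProductSpace ℝ V]
    (R1 : V → V → ℝ) (DqE : ℝ → V → V) (T : ℝ) (q : ℝ → V) (μ : Measure ℝ)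
    (t₀ t₁ : ℝ) : ℝ≥0∞ :=
  (∫⁻ r in Set.Ioo t₀ t₁, ENNReal.ofReal (localSlope R1 DqE r (q r))
      ∂(μ.restrict (contSet T q)))
  + ENNReal.ofReal (slopeDist R1 DqE 0 t₀ (q t₀) (rlim T q t₀))
  + ENNReal.ofReal (slopeDist R1 DqE 0 t₁ (llim q t₁) (q t₁))
  + ∑' t : ↥(jumpSet T q ∩ Set.Ioo t₀ t₁),
      (ENNReal.ofReal (slopeDist R1 DqE 0 t (llim q t) (q t))
       + ENNReal.ofReal (slopeDist R1 DqE 0 t (q t) (rlim T q t)))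

/-- The functional `Γ(q,[t₀,t₁])`. -/
def GammaFn {V : Type*} [NormedAddCommGroup V] [InnerProductSpace ℝ V]
    (R1 : V → V → ℝ) (DqE : ℝ → V → V) (E : ℝ → V → ℝ) (T : ℝ) (q : ℝ → V)
    (μ : Measure ℝ) (t₀ t₁ : ℝ) : ℝ≥0∞ :=
  (∫⁻ r in Set.Ioo t₀ t₁, ENNReal.ofReal (localSlope R1 DqE r (q r))
      ∂(μ.restrict (contSet T q)))
  + ENNReal.ofReal (|E t₀ (q t₀) - E t₀ (rlim T q t₀)|)
  + ENNReal.ofReal (|E t₁ (llim q t₁) - E t₁ (q t₁)|)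
  + ∑' t : ↥(jumpSet T q ∩ Set.Ioo t₀ t₁),
      (ENNReal.ofReal (|E (↑t) (q t) - E (↑t) (rlim T q t)|)
       + ENNReal.ofReal (|E (↑t) (llim q t) - E (↑t) (q t)|))

/-- The dissipation functional `Σ₁(q, [t₀,t₁])`. -/
def Sigma1 {V : Type*} [NormedAddCommGroup V] [InnerProductSpace ℝ V]
    (R1 : V → V → ℝ) (DqE : ℝ → V → V) (T : ℝ) (q : ℝ → V) (μ : Measure ℝ)
    (t₀ t₁ : ℝ) : ℝ≥0∞ :=
  (∫⁻ r in Set.Ioo t₀ t₁, ENNReal.ofReal (max (localSlope R1 DqE r (q r)) 1)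
      ∂(μ.restrict (contSet T q)))
  + (∫⁻ r in Set.Ioo t₀ t₁, ENNReal.ofReal (localSlope R1 DqE r (q r) - 1))
  + ENNReal.ofReal (slopeDist R1 DqE 1 t₀ (q t₀) (rlim T q t₀))
  + ENNReal.ofReal (slopeDist R1 DqE 1 t₁ (llim q t₁) (q t₁))
  + ∑' t : ↥(jumpSet T q ∩ Set.Ioo t₀ t₁),
      (ENNReal.ofReal (slopeDist R1 DqE 1 t (llim q t) (q t))
       + ENNReal.ofReal (slopeDist R1 DqE 1 t (q t) (rlim T q t)))

/-- A BV solution of the rate-independent system `(ℝ^d, d, E)`, where `μ` is the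
variation measure of `q`. -/
structure IsBVSol {V : Type*} [NormedAddCommGroup V] [InnerProductSpace ℝ V]
    (R1 : V → V → ℝ) (E Et : ℝ → V → ℝ) (DqE : ℝ → V → V) (T : ℝ) (q : ℝ → V)
    (μ : Measure ℝ) : Prop where
  en : ∀ t₀ t₁ : ℝ, 0 ≤ t₀ → t₀ < t₁ → t₁ ≤ T →
    ((E t₁ (q t₁) - E t₀ (q t₀) - ∫ t in t₀..t₁, Et t (q t) : ℝ) : EReal)
      ≤ -((Sigma0 R1 DqE T q μ t₀ t₁ : ℝ≥0∞) : EReal)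
  locstab : ∀ t ∈ Set.Icc 0 T \ jumpSet T q, localSlope R1 DqE t (q t) ≤ 1
  suppstab : ∀ t : ℝ, (∀ ε > 0, μ (Set.Ioo (t - ε) (t + ε)) ≠ 0) →
    1 ≤ localSlope R1 DqE t (q t)
  jump : ∀ t ∈ jumpSet T q, ∃ (y y' : ℝ → V) (θt : ℝ),
    IsACOn 0 1 y y' ∧ y 0 = llim q t ∧ y 1 = rlim T q t ∧ θt ∈ Set.Icc (0:ℝ) 1 ∧
    y θt = q t ∧ (∀ θ ∈ Set.Icc (0:ℝ) 1, 1 ≤ localSlope R1 DqE t (y θ)) ∧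
    E t (rlim T q t) - E t (llim q t)
      = -∫ θ in (0:ℝ)..1, localSlope R1 DqE t (y θ) * R1 (y θ) (y' θ)

/-- An energetic solution of the rate-independent system `(ℝ^d, d, E)`. -/
def IsEnergeticSol {V : Type*} [NormedAddCommGroup V] [InnerProductSpace ℝ V]
    (R1 : V → V → ℝ) (E Et : ℝ → V → ℝ) (T : ℝ) (q : ℝ → V) : Prop :=
  ∀ t ∈ Set.Icc (0:ℝ) T,
    (∀ p, E t (q t) ≤ E t p + finslerDist R1 (q t) p) ∧
    E t (q t) + (varWith (finslerDist R1) q (Set.Icc 0 t)).toReal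
      = E 0 (q 0) + ∫ s in (0:ℝ)..t, Et s (q s)

/-- The global slope of `E(t,·)` at `q`, w.r.t. the distance `dF`. -/
def gSlopeD {V : Type*} (dF : V → V → ℝ) (E : ℝ → V → ℝ) (t : ℝ) (q : V) : ℝ≥0∞ :=
  ⨆ (v : V) (_ : v ≠ q), ENNReal.ofReal (max (E t q - E t v) 0 / dF q v)

end

variable {d : ℕ}

/-!
At almost every `s` both curves are differentiable, and by the chain rule the left-hand side
`d/ds E(t̂,q̂) - ∂ₜE · t̂'` equals `⟪D_qE, q̂'⟫`, which by the definition of the slope is never below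
`-|q̂'| · |∂E|`. The equivalence is then a pointwise fact about reals `α = t̂' ≥ 0`,
`ν = |q̂'| ≥ 0` with `α + ν > 0`, `ξ = |∂E|` and `I ≥ -ν ξ`, read off case by case from `M₀`.
-/

lemma IsACOn.ae_hasDerivAt {W : Type*} [NormedAddCommGroup W] [NormedSpace ℝ W]
    [CompleteSpace W] {a b : ℝ} {y y' : ℝ → W} (h : IsACOn a b y y') :
    ∀ᵐ s, s ∈ Ioo a b → HasDerivAt y (y' s) s := by
  filter_upwards [h.intg.ae_hasDerivAt_integral] with s hs hsI
  have hy : (fun t => y a + ∫ r in a..t, y' r) =ᶠ[𝓝 s] y := by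
    filter_upwards [Icc_mem_nhds hsI.1 hsI.2] with t ht using (h.eq t ht).symm
  exact ((hs (Ioo_subset_Icc_self.trans Icc_subset_uIcc hsI) a left_mem_uIcc).const_add
    (y a)).congr_of_eventuallyEq hy.symm

lemma HasDerivAt.nonneg_of_monotoneOn_Icc {f : ℝ → ℝ} {f' a b s : ℝ}
    (hf : HasDerivAt f f' s) (hmono : MonotoneOn f (Icc a b)) (hs : s ∈ Ioo a b) :
    0 ≤ f' := by
  have hacc : AccPt s (𝓟 (Icc a b)) := by
    simpa using (PerfectSpace.univ_preperfect s (mem_univ s)).nhds_inter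
      (Icc_mem_nhds hs.1 hs.2)
  exact hf.hasDerivWithinAt.nonneg_of_monotoneOn hacc hmono

lemma IsC1Energy.hasDerivAt_comp {V : Type*} [NormedAddCommGroup V] [InnerProductSpace ℝ V]
    [CompleteSpace V] {E Et : ℝ → V → ℝ} {DqE : ℝ → V → V} (hE : IsC1Energy E Et DqE)
    {t : ℝ → ℝ} {q : ℝ → V} {s t' : ℝ} {q' : V}
    (ht : HasDerivAt t t' s) (hq : HasDerivAt q q' s) :
    HasDerivAt (fun r => E (t r) (q r)) (Et (t s) (q s) * t' + ⟪DqE (t s) (q s), q'⟫) s := by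
  have hF := hasStrictFDerivAt_uncurry_coprod (u := (t s, q s)) (f := E)
    (f₁ := fun t q => ContinuousLinearMap.toSpanSingleton ℝ (Et t q))
    (f₂ := fun t q => innerSL ℝ (DqE t q))
    (Eventually.of_forall fun p => (hE.hasDerivT p.1 p.2).hasFDerivAt)
    (Eventually.of_forall fun p => (hE.hasGrad p.1 p.2).hasFDerivAt)
    (ContinuousLinearMap.toSpanSingletonCLE.continuous.comp hE.contEt).continuousAt
    ((innerSL ℝ).continuous.comp hE.contDqE).continuousAt
  convert hF.hasFDerivAt.comp_hasDerivAt s (ht.prodMk hq) using 1 <;> try rfl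
  -- the goals left by `convert` other than this one only identify two `Module ℝ ℝ` instances
  rw [mul_comm]
  rfl

namespace IsFinsler

variable {V : Type*} [NormedAddCommGroup V] [InnerProductSpace ℝ V] {R1 : V → V → ℝ}

lemma pos (hR : IsFinsler R1) (q : V) {v : V} (hv : v ≠ 0) : 0 < R1 q v :=
  (hR.nonneg q v).lt_of_ne' (mt (hR.eq_zero_iff q v).1 hv)

lemma apply_neg (hR : IsFinsler R1) (q v : V) : R1 q (-v) = R1 q v := by
  simpa using hR.smul q (-1) v

lemma inner_div_smul (hR : IsFinsler R1) (G q v : V) {c : ℝ} (hc : 0 < c) :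
    ⟪G, c • v⟫ / R1 q (c • v) = ⟪G, v⟫ / R1 q v := by
  rw [inner_smul_right, hR.smul, abs_of_pos hc, mul_div_mul_left _ _ hc.ne']

/-- The quotient is invariant under positive scaling, so its values are attained on the unit
sphere, which is compact and avoids the zeros of `R1 q`. -/
lemma bddAbove_inner_div [FiniteDimensional ℝ V] (hR : IsFinsler R1) (G q : V) :
    BddAbove {r | ∃ v : V, v ≠ 0 ∧ r = ⟪G, v⟫ / R1 q v} := by
  have hcont : ContinuousOn (fun v => ⟪G, v⟫ / R1 q v) (Metric.sphere 0 1) :=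
    (continuous_const.inner continuous_id).continuousOn.div
      (hR.cont.comp (Continuous.prodMk_right q)).continuousOn
      fun v hv => (hR.pos q (by rintro rfl; simp at hv)).ne'
  refine ((isCompact_sphere 0 1).bddAbove_image hcont).mono ?_
  rintro _ ⟨v, hv, rfl⟩
  exact ⟨‖v‖⁻¹ • v, by simp [norm_smul, hv], hR.inner_div_smul G q v (by positivity)⟩

lemma neg_mul_localSlope_le_inner [FiniteDimensional ℝ V] (hR : IsFinsler R1)
    (DqE : ℝ → V → V) (t : ℝ) (q v : V) :
    -(R1 q v * localSlope R1 DqE t q) ≤ ⟪DqE t q, v⟫ := by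
  rcases eq_or_ne v 0 with rfl | hv
  · simp [(hR.eq_zero_iff q 0).2 rfl]
  have hle : ⟪DqE t q, -v⟫ / R1 q (-v) ≤ localSlope R1 DqE t q :=
    le_csSup (hR.bddAbove_inner_div _ q) ⟨-v, neg_ne_zero.2 hv, rfl⟩
  rw [hR.apply_neg, inner_neg_right, div_le_iff₀ (hR.pos q hv)] at hle
  linarith

end IsFinsler

lemma coe_le_neg_M0_iff {α ν ξ I : ℝ} (hα : 0 ≤ α) (hν : 0 ≤ ν) (hpos : 0 < α + ν)
    (hI : -(ν * ξ) ≤ I) :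
    (I : EReal) ≤ -M0 α ν ξ ↔ I = -(ν * ξ) ∧ (0 < α → ξ ≤ 1) ∧ (0 < ν → 1 ≤ ξ) := by
  unfold M0
  split_ifs with hα0 hξ
  · subst hα0
    rw [← EReal.coe_neg, EReal.coe_le_coe_iff]
    have hν0 : 0 < ν := by linarith
    constructor
    · intro h
      have : 1 ≤ ξ := by nlinarith [le_max_left (ξ - 1) 0, le_max_right (ξ - 1) 0]
      refine ⟨le_antisymm ?_ hI, by simp, fun _ => this⟩
      rw [max_eq_left (by linarith)] at h
      linarith
    · rintro ⟨h, -, h1⟩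
      rw [max_eq_left (by linarith [h1 hν0]), h]
      linarith
  · rw [← EReal.coe_neg, EReal.coe_le_coe_iff]
    constructor
    · intro h
      have : ν * ξ ≤ ν := by nlinarith
      exact ⟨by linarith, fun _ => hξ, fun hν0 => by nlinarith⟩
    · rintro ⟨h, -, h1⟩
      rcases hν.eq_or_lt with rfl | hν0
      · simp [h]
      · nlinarith [h1 hν0]
  · simp only [EReal.neg_top, le_bot_iff, EReal.coe_ne_bot, false_iff]
    exact fun h => hξ (h.2.1 (lt_of_le_of_ne hα (Ne.symm hα0)))

theorem statement5_general (s₀ s₁ : ℝ)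
    (R1 : EuclideanSpace ℝ (Fin d) → EuclideanSpace ℝ (Fin d) → ℝ)
    (hR : IsFinsler R1)
    (E Et : ℝ → EuclideanSpace ℝ (Fin d) → ℝ)
    (DqE : ℝ → EuclideanSpace ℝ (Fin d) → EuclideanSpace ℝ (Fin d))
    (hE : IsC1Energy E Et DqE)
    (th th' : ℝ → ℝ) (qh qh' : ℝ → EuclideanSpace ℝ (Fin d))
    (hACt : IsACOn s₀ s₁ th th') (hACq : IsACOn s₀ s₁ qh qh')
    (hmono : MonotoneOn th (Set.Icc s₀ s₁))
    (hnd : ∀ᵐ s ∂volume, s ∈ Set.Ioo s₀ s₁ → 0 < th' s + R1 (qh s) (qh' s)) :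
    (∀ᵐ s ∂volume, s ∈ Set.Ioo s₀ s₁ →
        ((deriv (fun r => E (th r) (qh r)) s - Et (th s) (qh s) * th' s : ℝ) : EReal)
          ≤ -(M0 (th' s) (R1 (qh s) (qh' s)) (localSlope R1 DqE (th s) (qh s))))
    ↔ (∀ᵐ s ∂volume, s ∈ Set.Ioo s₀ s₁ →
        (deriv (fun r => E (th r) (qh r)) s - Et (th s) (qh s) * th' s
            = -(R1 (qh s) (qh' s) * localSlope R1 DqE (th s) (qh s)) ∧
         (0 < th' s → localSlope R1 DqE (th s) (qh s) ≤ 1) ∧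
         (0 < R1 (qh s) (qh' s) → 1 ≤ localSlope R1 DqE (th s) (qh s)))) := by
  refine eventually_congr ?_
  filter_upwards [hACt.ae_hasDerivAt, hACq.ae_hasDerivAt, hnd] with s hth hqh hpos
  refine imp_congr_right fun hs => ?_
  rw [(hE.hasDerivAt_comp (hth hs) (hqh hs)).deriv, add_sub_cancel_left]
  exact coe_le_neg_M0_iff ((hth hs).nonneg_of_monotoneOn_Icc hmono hs) (hR.nonneg _ _)
    (hpos hs) (hR.neg_mul_localSlope_le_inner DqE _ _ _)

theorem statement5 (T s₀ s₁ : ℝ) (hT : 0 < T) (hs : s₀ < s₁)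
    (R1 : EuclideanSpace ℝ (Fin d) → EuclideanSpace ℝ (Fin d) → ℝ)
    (hR : IsFinsler R1) (hcomp : IsCompleteD (finslerDist R1))
    (E Et : ℝ → EuclideanSpace ℝ (Fin d) → ℝ)
    (DqE : ℝ → EuclideanSpace ℝ (Fin d) → EuclideanSpace ℝ (Fin d))
    (hE : IsC1Energy E Et DqE)
    (th th' : ℝ → ℝ) (qh qh' : ℝ → EuclideanSpace ℝ (Fin d))
    (hACt : IsACOn s₀ s₁ th th') (hACq : IsACOn s₀ s₁ qh qh')
    (hmap : ∀ s ∈ Set.Icc s₀ s₁, th s ∈ Set.Icc 0 T)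
    (hmono : MonotoneOn th (Set.Icc s₀ s₁))
    (hnd : ∀ᵐ s ∂volume, s ∈ Set.Ioo s₀ s₁ → 0 < th' s + R1 (qh s) (qh' s)) :
    (∀ᵐ s ∂volume, s ∈ Set.Ioo s₀ s₁ →
        ((deriv (fun r => E (th r) (qh r)) s - Et (th s) (qh s) * th' s : ℝ) : EReal)
          ≤ -(M0 (th' s) (R1 (qh s) (qh' s)) (localSlope R1 DqE (th s) (qh s))))
    ↔ (∀ᵐ s ∂volume, s ∈ Set.Ioo s₀ s₁ →
        (deriv (fun r => E (th r) (qh r)) s - Et (th s) (qh s) * th' s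
            = -(R1 (qh s) (qh' s) * localSlope R1 DqE (th s) (qh s)) ∧
         (0 < th' s → localSlope R1 DqE (th s) (qh s) ≤ 1) ∧
         (0 < R1 (qh s) (qh' s) → 1 ≤ localSlope R1 DqE (th s) (qh s)))) :=
  statement5_general s₀ s₁ R1 hR E Et DqE hE th th' qh qh' hACt hACq hmono hnd
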